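/- Let m < −5/2, let a₁, a₂, a₃ ∈ S^m(ℝ) and a(η) = a₁(η₁)a₂(η₂)a₃(η₃), and let b : ℝ³ → ℂ be measurable with ‖b‖ < ∞. Fix 0 < α < β and 0 < δ < min(1, α). Then there exists C > 0 such that for all ξ ∈ ℝ with |ξ| > 1 and all κ₂, κ₃ ∈ [α, β]: |a₁(ξ) a₂(κ₂ξ) a₃(κ₃ξ)| · | ∫_{A_{GGG}(ξ,κ₂,κ₃)^c} b(η) dη | ≤ C |ξ|^{3m−1}, where A_{GGG}(ξ,κ₂,κ₃)^c denotes the complement in ℝ³ of A_{GGG}(ξ,κ₂,κ₃). -/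

import Mathlib

open MeasureTheory

/-- The Japanese bracket `⟨t⟩ = (1+t²)^{1/2}`. -/
noncomputable def jb (t : ℝ) : ℝ := Real.sqrt (1 + t ^ 2)

/-- The symbol class `S^m(ℝ)`. -/
def SymbolClass (m : ℝ) (a : ℝ → ℂ) : Prop :=
  ContDiff ℝ (⊤ : ℕ∞) a ∧
    ∀ k : ℕ, ∃ C : ℝ, 0 < C ∧ ∀ t : ℝ, ‖iteratedDeriv k a t‖ ≤ C * jb t ^ (m - (k : ℝ))

/-- `A_{GGG}(ξ,κ₂,κ₃) = {η : |η₁−ξ| ≥ δ|ξ|, |η₂−κ₂ξ| ≥ δ|ξ|, |η₃−κ₃ξ| ≥ δ|ξ|}`. -/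
def A_GGG (δ ξ κ₂ κ₃ : ℝ) : Set (Fin 3 → ℝ) :=
  {η | δ * |ξ| ≤ |η 0 - ξ| ∧ δ * |ξ| ≤ |η 1 - κ₂ * ξ| ∧ δ * |ξ| ≤ |η 2 - κ₃ * ξ|}

/-- `‖b‖² = ∫ ⟨η₁⟩^{−2m−1}⟨η₂⟩^{−2m−1}⟨η₃⟩^{−2m−1}|b(η)|² dη` as an `ℝ≥0∞`-valued integral. -/
noncomputable def bNormSq (m : ℝ) (b : (Fin 3 → ℝ) → ℂ) : ENNReal :=
  ∫⁻ η : Fin 3 → ℝ, ENNReal.ofReal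
    (jb (η 0) ^ (-2 * m - 1) * jb (η 1) ^ (-2 * m - 1) * jb (η 2) ^ (-2 * m - 1) * ‖b η‖ ^ 2)

/-!
Since `κ₂, κ₃ ≥ α`, each of `|ξ|, |κ₂ ξ|, |κ₃ ξ|` is at least `min 1 α * |ξ|`, so the symbol
factor is `O(|ξ|^{3m})`. Off `A_GGG` some `η_i` lies within `δ|ξ|` of its centre, hence
`P(η) = ⟨η₁⟩⟨η₂⟩⟨η₃⟩ ≥ ε|ξ|` with `ε = min 1 α - δ > 0`. Splitting
`|b|² = P^{2m+3} · P^{-2} · P^{-2m-1}|b|²` and using `P^{2m+3} ≤ (ε|ξ|)^{2m+3}`, AM-GM gives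
`|b| ≤ (ε|ξ|)^{m+3/2} (P^{-2} + P^{-2m-1}|b|²) / 2` there. Both terms are integrable, the second
because `‖b‖ < ∞`, so the integral over the complement of `A_GGG` is
`O(|ξ|^{m+3/2}) = O(|ξ|^{-1})` as `m ≤ -5/2`.
-/

lemma one_le_jb (t : ℝ) : 1 ≤ jb t :=
  Real.one_le_sqrt.2 (by nlinarith)

lemma jb_pos (t : ℝ) : 0 < jb t :=
  one_pos.trans_le (one_le_jb t)

lemma abs_le_jb (t : ℝ) : |t| ≤ jb t := by
  rw [← Real.sqrt_sq_eq_abs]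
  exact Real.sqrt_le_sqrt (by linarith)

lemma continuous_jb : Continuous jb :=
  Real.continuous_sqrt.comp (by fun_prop)

lemma jb_rpow (t r : ℝ) : jb t ^ r = (1 + ‖t‖ ^ 2) ^ (r / 2) := by
  rw [jb, Real.sqrt_eq_rpow, ← Real.rpow_mul (by positivity), Real.norm_eq_abs, sq_abs]
  ring_nf

lemma integrable_jb_rpow {r : ℝ} (hr : 1 < r) : Integrable (fun t : ℝ => jb t ^ (-r)) := by
  simp_rw [jb_rpow]
  exact integrable_rpow_neg_one_add_norm_sq (by simpa using hr)

lemma abs_le_prod_jb {ι : Type*} [Fintype ι] (η : ι → ℝ) (i : ι) :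
    |η i| ≤ ∏ j, jb (η j) := by
  classical
  rw [← Finset.mul_prod_erase _ _ (Finset.mem_univ i)]
  exact (abs_le_jb (η i)).trans <| le_mul_of_one_le_right (jb_pos _).le <|
    Finset.one_le_prod fun j _ => one_le_jb (η j)

lemma integrable_prod_jb_rpow {ι : Type*} [Fintype ι] {r : ℝ} (hr : 1 < r) :
    Integrable (fun η : ι → ℝ => (∏ i, jb (η i)) ^ (-r)) := by
  simp_rw [← Real.finsetProd_rpow _ _ (fun i _ => (jb_pos _).le)]
  exact Integrable.fintype_prod (f := fun _ t => jb t ^ (-r)) fun _ => integrable_jb_rpow hr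

lemma prod_jb_pos {ι : Type*} [Fintype ι] (η : ι → ℝ) : 0 < ∏ i, jb (η i) :=
  Finset.prod_pos fun i _ => jb_pos (η i)

lemma measurable_prod_jb {ι : Type*} [Fintype ι] : Measurable fun η : ι → ℝ => ∏ i, jb (η i) :=
  Finset.measurable_prod _ fun i _ => continuous_jb.measurable.comp (measurable_pi_apply i)

lemma abs_le_add_div_two_of_sq_le_mul {x u v : ℝ} (hu : 0 ≤ u) (hv : 0 ≤ v) (h : x ^ 2 ≤ u * v) :
    |x| ≤ (u + v) / 2 := by
  refine abs_le_of_sq_le_sq ?_ (by positivity)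
  nlinarith [sq_nonneg (u - v)]

lemma abs_le_rpow_mul_add_div_two {x P R s r : ℝ} (hR : 0 < R) (hRP : R ≤ P) (hs : s ≤ 0) :
    |x| ≤ R ^ s * (P ^ (-r) + P ^ (r - 2 * s) * x ^ 2) / 2 := by
  have hP : 0 < P := hR.trans_le hRP
  have hratio : 1 ≤ R ^ s * P ^ (-s) := by
    rw [Real.rpow_neg hP.le, ← div_eq_mul_inv, one_le_div (Real.rpow_pos_of_pos hP s)]
    exact Real.rpow_le_rpow_of_nonpos hR hRP hs
  have hexp : P ^ (-r) * P ^ (r - 2 * s) = P ^ (-s) * P ^ (-s) := by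
    rw [← Real.rpow_add hP, ← Real.rpow_add hP]; ring_nf
  rw [mul_add]
  refine abs_le_add_div_two_of_sq_le_mul (by positivity) (by positivity) ?_
  calc x ^ 2 ≤ (R ^ s * P ^ (-s)) ^ 2 * x ^ 2 :=
        le_mul_of_one_le_left (sq_nonneg x) (one_le_pow₀ hratio)
    _ = R ^ s * P ^ (-r) * (R ^ s * (P ^ (r - 2 * s) * x ^ 2)) := by
        linear_combination (R ^ s) ^ 2 * x ^ 2 * hexp.symm

lemma SymbolClass.exists_norm_le_rpow {m : ℝ} {a : ℝ → ℂ} (ha : SymbolClass m a) (hm : m ≤ 0) :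
    ∃ C, 0 < C ∧ ∀ R t : ℝ, 0 < R → R ≤ |t| → ‖a t‖ ≤ C * R ^ m := by
  obtain ⟨C, hC, hbound⟩ := ha.2 0
  refine ⟨C, hC, fun R t hR hRt => ?_⟩
  have h := hbound t
  rw [iteratedDeriv_zero, Nat.cast_zero, sub_zero] at h
  exact h.trans <| mul_le_mul_of_nonneg_left
    (Real.rpow_le_rpow_of_nonpos hR (hRt.trans (abs_le_jb t)) hm) hC.le

lemma mul_abs_le_abs_mul {c κ : ℝ} (h : c ≤ κ) (ξ : ℝ) : c * |ξ| ≤ |κ * ξ| := by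
  rw [abs_mul]
  exact mul_le_mul_of_nonneg_right (h.trans (le_abs_self κ)) (abs_nonneg ξ)

lemma exists_norm_mul_mul_le_rpow {m α : ℝ} {a₁ a₂ a₃ : ℝ → ℂ} (h₁ : SymbolClass m a₁)
    (h₂ : SymbolClass m a₂) (h₃ : SymbolClass m a₃) (hm : m ≤ 0) (hα : 0 < α) :
    ∃ A, 0 < A ∧ ∀ ξ κ₂ κ₃ : ℝ, ξ ≠ 0 → α ≤ κ₂ → α ≤ κ₃ →
      ‖a₁ ξ * a₂ (κ₂ * ξ) * a₃ (κ₃ * ξ)‖ ≤ A * |ξ| ^ (3 * m) := by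
  obtain ⟨C₁, hC₁, e₁⟩ := h₁.exists_norm_le_rpow hm
  obtain ⟨C₂, hC₂, e₂⟩ := h₂.exists_norm_le_rpow hm
  obtain ⟨C₃, hC₃, e₃⟩ := h₃.exists_norm_le_rpow hm
  set μ := min 1 α
  have hμ : 0 < μ := lt_min one_pos hα
  refine ⟨C₁ * C₂ * C₃ * μ ^ (3 * m), by positivity, fun ξ κ₂ κ₃ hξ hκ₂ hκ₃ => ?_⟩
  have hR : 0 < μ * |ξ| := mul_pos hμ (abs_pos.2 hξ)
  have hR₁ : μ * |ξ| ≤ |ξ| := by simpa using mul_abs_le_abs_mul (min_le_left 1 α) ξ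
  have hR₂ := mul_abs_le_abs_mul ((min_le_right 1 α).trans hκ₂) ξ
  have hR₃ := mul_abs_le_abs_mul ((min_le_right 1 α).trans hκ₃) ξ
  have hcube : (μ * |ξ|) ^ m * (μ * |ξ|) ^ m * (μ * |ξ|) ^ m = μ ^ (3 * m) * |ξ| ^ (3 * m) := by
    rw [← Real.rpow_add hR, ← Real.rpow_add hR, Real.mul_rpow hμ.le (abs_nonneg ξ)]
    ring_nf
  calc ‖a₁ ξ * a₂ (κ₂ * ξ) * a₃ (κ₃ * ξ)‖
      ≤ (C₁ * (μ * |ξ|) ^ m) * (C₂ * (μ * |ξ|) ^ m) * (C₃ * (μ * |ξ|) ^ m) := by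
        rw [norm_mul, norm_mul]
        gcongr
        exacts [e₁ _ _ hR hR₁, e₂ _ _ hR hR₂, e₃ _ _ hR hR₃]
    _ = C₁ * C₂ * C₃ * μ ^ (3 * m) * |ξ| ^ (3 * m) := by
        rw [mul_assoc _ (μ ^ (3 * m)), ← hcube]; ring

lemma measurableSet_A_GGG (δ ξ κ₂ κ₃ : ℝ) : MeasurableSet (A_GGG δ ξ κ₂ κ₃) := by
  unfold A_GGG
  measurability

lemma le_prod_jb_of_notMem_A_GGG {α δ ξ κ₂ κ₃ : ℝ} {η : Fin 3 → ℝ} (hκ₂ : α ≤ κ₂)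
    (hκ₃ : α ≤ κ₃) (hη : η ∉ A_GGG δ ξ κ₂ κ₃) : (min 1 α - δ) * |ξ| ≤ ∏ i, jb (η i) := by
  have near : ∀ (i : Fin 3) (c : ℝ), min 1 α * |ξ| ≤ |c| → |η i - c| < δ * |ξ| →
      (min 1 α - δ) * |ξ| ≤ ∏ j, jb (η j) := fun i c hc hi => by
    have := abs_sub_abs_le_abs_sub c (η i)
    rw [abs_sub_comm] at this
    linarith [abs_le_prod_jb η i]
  simp only [A_GGG, Set.mem_ofPred_eq, not_and_or, not_le] at hη
  rcases hη with h | h | h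
  · exact near 0 ξ (by simpa using mul_abs_le_abs_mul (min_le_left 1 α) ξ) h
  · exact near 1 _ (mul_abs_le_abs_mul ((min_le_right 1 α).trans hκ₂) ξ) h
  · exact near 2 _ (mul_abs_le_abs_mul ((min_le_right 1 α).trans hκ₃) ξ) h

lemma bNormSq_eq_lintegral (m : ℝ) (b : (Fin 3 → ℝ) → ℂ) :
    bNormSq m b = ∫⁻ η, ENNReal.ofReal ((∏ i, jb (η i)) ^ (-2 * m - 1) * ‖b η‖ ^ 2) := by
  simp only [bNormSq, Fin.prod_univ_three, Real.mul_rpow (jb_pos _).le (jb_pos _).le,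
    Real.mul_rpow (mul_pos (jb_pos _) (jb_pos _)).le (jb_pos _).le]

lemma integrable_of_bNormSq_lt_top {m : ℝ} {b : (Fin 3 → ℝ) → ℂ} (hb : Measurable b)
    (hbnorm : bNormSq m b < ⊤) :
    Integrable fun η : Fin 3 → ℝ => (∏ i, jb (η i)) ^ (-2 * m - 1) * ‖b η‖ ^ 2 := by
  refine ⟨((measurable_prod_jb.pow_const _).mul (hb.norm.pow_const 2)).aestronglyMeasurable,
    (hasFiniteIntegral_iff_ofReal (ae_of_all _ fun η => ?_)).2 ?_⟩
  · exact mul_nonneg (Real.rpow_nonneg (prod_jb_pos η).le _) (sq_nonneg _)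
  · rwa [← bNormSq_eq_lintegral]

lemma exists_norm_setIntegral_compl_A_GGG_le {m α δ : ℝ} {b : (Fin 3 → ℝ) → ℂ}
    (hm : m ≤ -3 / 2) (hb : Measurable b) (hbnorm : bNormSq m b < ⊤) (hδ : δ < min 1 α) :
    ∃ B, 0 ≤ B ∧ ∀ ξ κ₂ κ₃ : ℝ, ξ ≠ 0 → α ≤ κ₂ → α ≤ κ₃ →
      ‖∫ η in (A_GGG δ ξ κ₂ κ₃)ᶜ, b η‖ ≤ B * |ξ| ^ (m + 3 / 2) := by
  set U : (Fin 3 → ℝ) → ℝ := fun η => (∏ i, jb (η i)) ^ (-2 : ℝ)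
  set Q : (Fin 3 → ℝ) → ℝ := fun η => (∏ i, jb (η i)) ^ (-2 * m - 1) * ‖b η‖ ^ 2
  have hε : 0 < min 1 α - δ := sub_pos.2 hδ
  have hUQ0 : ∀ η, 0 ≤ U η + Q η := fun η => add_nonneg (Real.rpow_nonneg (prod_jb_pos η).le _)
    (mul_nonneg (Real.rpow_nonneg (prod_jb_pos η).le _) (sq_nonneg _))
  have hUQ : Integrable fun η => U η + Q η :=
    (integrable_prod_jb_rpow one_lt_two).add (integrable_of_bNormSq_lt_top hb hbnorm)
  refine ⟨(min 1 α - δ) ^ (m + 3 / 2) * (∫ η, U η + Q η) / 2,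
    div_nonneg (mul_nonneg (Real.rpow_nonneg hε.le _) (integral_nonneg hUQ0)) zero_le_two,
    fun ξ κ₂ κ₃ hξ hκ₂ hκ₃ => ?_⟩
  have hR : 0 < (min 1 α - δ) * |ξ| := mul_pos hε (abs_pos.2 hξ)
  set F : (Fin 3 → ℝ) → ℝ := fun η => ((min 1 α - δ) * |ξ|) ^ (m + 3 / 2) * (U η + Q η) / 2
  have hF : Integrable F := (hUQ.const_mul _).div_const 2
  have hbF : ∀ η ∈ (A_GGG δ ξ κ₂ κ₃)ᶜ, ‖b η‖ ≤ F η := fun η hη => by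
    have h := abs_le_rpow_mul_add_div_two (x := ‖b η‖) (r := 2) hR
      (le_prod_jb_of_notMem_A_GGG hκ₂ hκ₃ hη) (by linarith : m + 3 / 2 ≤ 0)
    rw [abs_norm] at h
    convert h using 6; ring
  calc ‖∫ η in (A_GGG δ ξ κ₂ κ₃)ᶜ, b η‖ ≤ ∫ η in (A_GGG δ ξ κ₂ κ₃)ᶜ, F η :=
        norm_integral_le_of_norm_le hF.integrableOn
          (ae_restrict_of_forall_mem (measurableSet_A_GGG δ ξ κ₂ κ₃).compl hbF)
    _ ≤ ∫ η, F η := setIntegral_le_integral hF <| ae_of_all _ fun η =>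
        div_nonneg (mul_nonneg (Real.rpow_nonneg hR.le _) (hUQ0 η)) zero_le_two
    _ = _ := by
        rw [integral_div, integral_const_mul, Real.mul_rpow hε.le (abs_nonneg ξ)]
        ring

theorem stmt7_general (m : ℝ) (hm : m < -5 / 2) (a₁ a₂ a₃ : ℝ → ℂ)
    (h₁ : SymbolClass m a₁) (h₂ : SymbolClass m a₂) (h₃ : SymbolClass m a₃)
    (b : (Fin 3 → ℝ) → ℂ) (hb : Measurable b) (hbnorm : bNormSq m b < ⊤)
    (α β δ : ℝ) (hα : 0 < α) (hδ1 : δ < min 1 α) :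
    ∃ C : ℝ, 0 < C ∧
      ∀ ξ : ℝ, 1 < |ξ| → ∀ κ₂ ∈ Set.Icc α β, ∀ κ₃ ∈ Set.Icc α β,
        ‖a₁ ξ * a₂ (κ₂ * ξ) * a₃ (κ₃ * ξ)‖ * ‖∫ η in (A_GGG δ ξ κ₂ κ₃)ᶜ, b η‖
          ≤ C * |ξ| ^ (3 * m - 1) := by
  obtain ⟨A, hA, hsymbol⟩ := exists_norm_mul_mul_le_rpow h₁ h₂ h₃ (by linarith) hα
  obtain ⟨B, hB, hintegral⟩ :=
    exists_norm_setIntegral_compl_A_GGG_le (by linarith) hb hbnorm hδ1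
  refine ⟨A * B + 1, by positivity, fun ξ hξ κ₂ hκ₂ κ₃ hκ₃ => ?_⟩
  have hξ0 : 0 < |ξ| := one_pos.trans hξ
  have hξ0' : ξ ≠ 0 := abs_pos.1 hξ0
  calc ‖a₁ ξ * a₂ (κ₂ * ξ) * a₃ (κ₃ * ξ)‖ * ‖∫ η in (A_GGG δ ξ κ₂ κ₃)ᶜ, b η‖
      ≤ (A * |ξ| ^ (3 * m)) * (B * |ξ| ^ (m + 3 / 2)) :=
        mul_le_mul (hsymbol ξ κ₂ κ₃ hξ0' hκ₂.1 hκ₃.1) (hintegral ξ κ₂ κ₃ hξ0' hκ₂.1 hκ₃.1)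
          (norm_nonneg _) (by positivity)
    _ = A * B * (|ξ| ^ (3 * m) * |ξ| ^ (m + 3 / 2)) := by ring
    _ = A * B * |ξ| ^ (3 * m + (m + 3 / 2)) := by rw [← Real.rpow_add hξ0]
    _ ≤ (A * B + 1) * |ξ| ^ (3 * m - 1) := by
        gcongr
        · linarith
        · exact hξ.le
        · linarith

theorem stmt7 (m : ℝ) (hm : m < -5 / 2) (a₁ a₂ a₃ : ℝ → ℂ)
    (h₁ : SymbolClass m a₁) (h₂ : SymbolClass m a₂) (h₃ : SymbolClass m a₃)
    (b : (Fin 3 → ℝ) → ℂ) (hb : Measurable b) (hbnorm : bNormSq m b < ⊤)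
    (α β δ : ℝ) (hα : 0 < α) (hαβ : α < β) (hδ : 0 < δ) (hδ1 : δ < min 1 α) :
    ∃ C : ℝ, 0 < C ∧
      ∀ ξ : ℝ, 1 < |ξ| → ∀ κ₂ ∈ Set.Icc α β, ∀ κ₃ ∈ Set.Icc α β,
        ‖a₁ ξ * a₂ (κ₂ * ξ) * a₃ (κ₃ * ξ)‖ * ‖∫ η in (A_GGG δ ξ κ₂ κ₃)ᶜ, b η‖
          ≤ C * |ξ| ^ (3 * m - 1) :=
  stmt7_general m hm a₁ a₂ a₃ h₁ h₂ h₃ b hb hbnorm α β δ hα hδ1
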